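/- Let u_n and v_n be the normalized Maclaurin coefficients of e^{pz}·I_ν(z) and of e^{−pz}·I_ν(z) respectively. Then the n-th normalized Maclaurin coefficient of sinh(pz)·I_ν(z) equals (u_n − v_n)/2 for every n ≥ 0; moreover u_0 = 1, u_1 = p, v_0 = 1, v_1 = −p, and for every n ≥ 1: u_{n+1} = (p(2ν+2n+1)/((n+1)(2ν+n+1)))·u_n + ((1−p²)/((n+1)(2ν+n+1)))·u_{n−1} and v_{n+1} = −(p(2ν+2n+1)/((n+1)(2ν+n+1)))·v_n + ((1−p²)/((n+1)(2ν+n+1)))·v_{n−1}. -/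

import Mathlib

open Complex

/-- The entire part of the modified Bessel function of the first kind:
`I_ν(z) = (z/2)^ν * modBesselSeries ν z`. -/
noncomputable def modBesselSeries (ν : ℂ) (z : ℂ) : ℂ :=
  ∑' k : ℕ, z ^ (2 * k) / (4 ^ k * (Nat.factorial k : ℂ) * Complex.Gamma (ν + (k : ℂ) + 1))

/-- The normalized `n`-th Maclaurin coefficient of `h(z) * I_ν(z)`:
`Γ(ν+1)` times the `n`-th Maclaurin coefficient of `z ↦ h z * modBesselSeries ν z`. -/
noncomputable def normCoeff (ν : ℂ) (h : ℂ → ℂ) (n : ℕ) : ℂ :=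
  Complex.Gamma (ν + 1) *
    (iteratedDeriv n (fun z => h z * modBesselSeries ν z) 0 / (Nat.factorial n : ℂ))

/-!
Write `G_ν(z) = ∑ β_k z^{2k}` with `β_k = 1 / (4^k k! Γ(ν+k+1))`. The relation
`Γ(s)⁻¹ = s Γ(s+1)⁻¹` gives `β_k = 4(k+1)(ν+k+1) β_{k+1}`, which says that the Maclaurin
series `B` of `G_ν` satisfies the formal Bessel equation `X B'' + (2ν+1) B' = X B`. As
`(e^{qX})' = q e^{qX}`, the product `F = e^{qX} B` then satisfies
`X (F'' - 2q F' + q² F) + (2ν+1) (F' - q F) = X F`,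
and the coefficient of `X^n` in this identity is the three-term recurrence. Both series converge on
all of `ℂ`, so the Maclaurin coefficients of `e^{qz} G_ν(z)` are those of the Cauchy product `F`;
the case of `sinh` follows from `sinh(pz) = (e^{pz} - e^{-pz}) / 2`.
-/

open PowerSeries Nat

theorem PowerSeries.derivative_C_mul {R : Type*} [CommSemiring R] (f : R⟦X⟧) (a : R) :
    d⁄dX R (C a * f) = C a * d⁄dX R f := by
  rw [← smul_eq_C_mul, ← smul_eq_C_mul, Derivation.map_smul]

theorem PowerSeries.derivative_rescale {R : Type*} [CommSemiring R] (f : R⟦X⟧) (a : R) :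
    d⁄dX R (rescale a f) = C a * rescale a (d⁄dX R f) := by
  ext n
  simp only [coeff_derivative, coeff_rescale, coeff_C_mul]
  ring

section

variable {𝕜 : Type*} [RCLike 𝕜]

def HasSumEverywhere (a : 𝕜⟦X⟧) (f : 𝕜 → 𝕜) : Prop :=
  ∀ z, HasSum (fun n => coeff n a * z ^ n) (f z)

namespace HasSumEverywhere

variable {a b : 𝕜⟦X⟧} {f g : 𝕜 → 𝕜}

theorem sub (ha : HasSumEverywhere a f) (hb : HasSumEverywhere b g) :
    HasSumEverywhere (a - b) (fun z => f z - g z) := fun z => by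
  simpa only [map_sub, sub_mul] using (ha z).sub (hb z)

theorem C_mul (ha : HasSumEverywhere a f) (c : 𝕜) :
    HasSumEverywhere (C c * a) (fun z => c * f z) := fun z => by
  simpa only [coeff_C_mul, mul_assoc] using (ha z).mul_left c

theorem mul (ha : HasSumEverywhere a f) (hb : HasSumEverywhere b g) :
    HasSumEverywhere (a * b) (fun z => f z * g z) := fun z => by
  have hfa := (ha z).summable.norm
  have hgb := (hb z).summable.norm
  have hprod := tsum_mul_tsum_eq_tsum_sum_antidiagonal_of_summable_norm hfa hgb
  rw [(ha z).tsum_eq, (hb z).tsum_eq] at hprod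
  show HasSum _ (f z * g z)
  have hterm : (fun n => coeff n (a * b) * z ^ n) = fun n =>
      ∑ kl ∈ Finset.HasAntidiagonal.antidiagonal n,
        coeff kl.1 a * z ^ kl.1 * (coeff kl.2 b * z ^ kl.2) := by
    ext n
    rw [coeff_mul, Finset.sum_mul]
    refine Finset.sum_congr rfl fun kl hkl => ?_
    rw [← Finset.HasAntidiagonal.mem_antidiagonal.mp hkl, pow_add]
    ring
  rw [hterm, hprod]
  exact (summable_norm_sum_mul_antidiagonal_of_summable_norm hfa hgb).of_norm.hasSum

theorem iteratedDeriv_zero (ha : HasSumEverywhere a f) (n : ℕ) :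
    iteratedDeriv n f 0 = (n.factorial : 𝕜) * coeff n a := by
  set P := FormalMultilinearSeries.ofScalars 𝕜 (fun n => coeff n a)
  have hP : HasFPowerSeriesOnBall f P 0 ⊤ := by
    refine ⟨?_, by simp, fun {y} _ => ?_⟩
    · refine le_of_eq (P.radius_eq_top_of_summable_norm fun r => ?_).symm
      simpa only [P, FormalMultilinearSeries.ofScalars_norm, norm_mul, norm_pow,
        RCLike.norm_ofReal, NNReal.abs_eq] using (ha ((r : ℝ) : 𝕜)).summable.norm
    · simpa only [zero_add, P, FormalMultilinearSeries.ofScalars_apply_eq, smul_eq_mul,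
        mul_comm (y ^ _)] using ha y
  rw [iteratedDeriv_eq_iteratedFDeriv, ← hP.factorial_smul 1 n,
    FormalMultilinearSeries.ofScalars_apply_eq, one_pow, smul_eq_mul, mul_one, nsmul_eq_mul]

end HasSumEverywhere

end

noncomputable def besselCoeff (ν : ℂ) (k : ℕ) : ℂ :=
  (4 ^ k * k ! * Gamma (ν + k + 1))⁻¹

-- Mathlib's `Gamma` is `0` at its poles, so `(Gamma s)⁻¹` is the entire function `1 / Γ(s)`
-- and its recurrence `one_div_Gamma_eq_self_mul_one_div_Gamma_add_one` has no exceptions.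
theorem besselCoeff_eq_mul_besselCoeff_succ (ν : ℂ) (k : ℕ) :
    besselCoeff ν k = 4 * (k + 1) * (ν + k + 1) * besselCoeff ν (k + 1) := by
  simp only [besselCoeff, mul_inv, one_div_Gamma_eq_self_mul_one_div_Gamma_add_one (ν + k + 1),
    pow_succ, factorial_succ]
  push_cast
  field_simp
  ring_nf

theorem hasSum_modBesselSeries (ν z : ℂ) :
    HasSum (fun k => besselCoeff ν k * z ^ (2 * k)) (modBesselSeries ν z) := by
  suffices Summable fun k => besselCoeff ν k * z ^ (2 * k) by
    convert this.hasSum using 1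
    exact tsum_congr fun k => by rw [besselCoeff, div_eq_mul_inv, mul_comm]
  refine summable_of_ratio_norm_eventually_le (r := 1 / 2) (by norm_num) ?_
  filter_upwards [Filter.eventually_ge_atTop ⌈‖z‖ ^ 2 + ‖ν‖⌉₊] with k hk
  have hk : ‖z‖ ^ 2 + ‖ν‖ ≤ k := Nat.ceil_le.mp hk
  have hnorm : (k : ℝ) + 1 - ‖ν‖ ≤ ‖ν + k + 1‖ := by
    have := norm_sub_norm_le ((k + 1 : ℕ) : ℂ) (-ν)
    rw [norm_neg, Complex.norm_natCast] at this
    push_cast at this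
    rwa [sub_neg_eq_add, add_comm _ ν, ← add_assoc] at this
  have hgrowth : 2 * ‖z‖ ^ 2 ≤ ‖4 * ((k : ℂ) + 1) * (ν + k + 1)‖ := by
    rw [norm_mul, norm_mul, ← Nat.cast_succ, Complex.norm_natCast, Complex.norm_ofNat,
      Nat.cast_succ]
    nlinarith [norm_nonneg ν, norm_nonneg (ν + k + 1), sq_nonneg ‖z‖]
  calc ‖besselCoeff ν (k + 1) * z ^ (2 * (k + 1))‖
      = ‖z‖ ^ 2 * (‖besselCoeff ν (k + 1)‖ * ‖z‖ ^ (2 * k)) := by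
        rw [norm_mul, norm_pow, mul_add, pow_add]; ring
    _ ≤ ‖4 * ((k : ℂ) + 1) * (ν + k + 1)‖ / 2 *
          (‖besselCoeff ν (k + 1)‖ * ‖z‖ ^ (2 * k)) := by
        gcongr; linarith
    _ = 1 / 2 * ‖besselCoeff ν k * z ^ (2 * k)‖ := by
        rw [besselCoeff_eq_mul_besselCoeff_succ ν k]; simp only [norm_mul, norm_pow]; ring

noncomputable def besselSeries (ν : ℂ) : ℂ⟦X⟧ :=
  expand 2 two_ne_zero (mk (besselCoeff ν))

theorem hasSumEverywhere_besselSeries (ν : ℂ) :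
    HasSumEverywhere (besselSeries ν) (modBesselSeries ν) := fun z => by
  have hodd : ∀ n ∉ Set.range (2 * ·), coeff n (besselSeries ν) * z ^ n = 0 := by
    rintro n hn
    rw [besselSeries, coeff_expand_of_not_dvd _ _ _ fun ⟨k, hk⟩ => hn ⟨k, hk.symm⟩,
      zero_mul]
  rw [← (mul_right_injective₀ two_ne_zero).hasSum_iff hodd]
  simpa [Function.comp_def, besselSeries, pow_mul] using hasSum_modBesselSeries ν z

theorem coeff_besselSeries_add_two (ν : ℂ) (n : ℕ) :
    (n + 2) * (2 * ν + n + 2) * coeff (n + 2) (besselSeries ν) = coeff n (besselSeries ν) := by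
  rcases Nat.even_or_odd' n with ⟨k, rfl | rfl⟩
  · rw [show 2 * k + 2 = 2 * (k + 1) by ring, besselSeries, coeff_expand_mul, coeff_expand_mul,
      coeff_mk, coeff_mk, besselCoeff_eq_mul_besselCoeff_succ ν k]
    push_cast
    ring
  · rw [show 2 * k + 1 + 2 = 2 * (k + 1) + 1 by ring, besselSeries,
      coeff_expand_of_not_dvd _ _ _ (by omega), coeff_expand_of_not_dvd _ _ _ (by omega), mul_zero]

theorem besselSeries_ode (ν : ℂ) :
    X * d⁄dX ℂ (d⁄dX ℂ (besselSeries ν)) + C (2 * ν + 1) * d⁄dX ℂ (besselSeries ν) =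
      X * besselSeries ν := by
  ext n
  rcases n with _ | n
  · rw [map_add, coeff_zero_X_mul, coeff_zero_X_mul, coeff_C_mul, coeff_derivative, besselSeries,
      coeff_expand_of_not_dvd _ _ _ (by decide)]
    ring
  · rw [map_add, coeff_succ_X_mul, coeff_succ_X_mul, coeff_C_mul, coeff_derivative,
      coeff_derivative, ← coeff_besselSeries_add_two ν n]
    push_cast
    ring

theorem hasSumEverywhere_rescale_exp (q : ℂ) :
    HasSumEverywhere (rescale q (exp ℂ)) (fun z => Complex.exp (q * z)) := fun z => by
  rw [Complex.exp_eq_exp_ℂ]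
  convert NormedSpace.expSeries_div_hasSum_exp (q * z) using 1
  ext n
  simp only [coeff_rescale, coeff_exp, one_div, map_inv₀, map_natCast]
  ring

noncomputable def expBesselSeries (ν q : ℂ) : ℂ⟦X⟧ :=
  rescale q (exp ℂ) * besselSeries ν

theorem hasSumEverywhere_expBesselSeries (ν q : ℂ) :
    HasSumEverywhere (expBesselSeries ν q) (fun z => Complex.exp (q * z) * modBesselSeries ν z) :=
  (hasSumEverywhere_rescale_exp q).mul (hasSumEverywhere_besselSeries ν)

theorem coeff_zero_expBesselSeries (ν q : ℂ) :
    coeff 0 (expBesselSeries ν q) = (Gamma (ν + 1))⁻¹ := by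
  simp [expBesselSeries, besselSeries, besselCoeff, coeff_mul]

theorem coeff_one_expBesselSeries (ν q : ℂ) :
    coeff 1 (expBesselSeries ν q) = q * (Gamma (ν + 1))⁻¹ := by
  simp [expBesselSeries, besselSeries, besselCoeff, coeff_mul, Finset.Nat.antidiagonal_succ,
    coeff_expand_of_not_dvd]

theorem expBesselSeries_ode (ν q : ℂ) :
    X * (d⁄dX ℂ (d⁄dX ℂ (expBesselSeries ν q)) -
        2 * C q * d⁄dX ℂ (expBesselSeries ν q) + C q ^ 2 * expBesselSeries ν q) +
      C (2 * ν + 1) * (d⁄dX ℂ (expBesselSeries ν q) - C q * expBesselSeries ν q) =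
    X * expBesselSeries ν q := by
  set E := rescale q (exp ℂ)
  set B := besselSeries ν
  have hE : d⁄dX ℂ E = C q * E := by rw [derivative_rescale, derivative_exp]
  have hF : d⁄dX ℂ (E * B) = C q * (E * B) + E * d⁄dX ℂ B := by
    rw [Derivation.leibniz, hE, smul_eq_mul, smul_eq_mul]; ring
  have hF2 : d⁄dX ℂ (d⁄dX ℂ (E * B)) =
      C q * d⁄dX ℂ (E * B) + C q * E * d⁄dX ℂ B + E * d⁄dX ℂ (d⁄dX ℂ B) := by
    rw [hF, map_add, derivative_C_mul, hF, Derivation.leibniz, hE, smul_eq_mul, smul_eq_mul]; ring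
  -- `F' - qF = E B'` and `F'' - 2qF' + q²F = E B''`, so this is `E` times `besselSeries_ode`.
  simp only [expBesselSeries]
  linear_combination X * hF2 + (C (2 * ν + 1) - X * C q) * hF + E * besselSeries_ode ν

theorem coeff_expBesselSeries_succ (ν q : ℂ) {n : ℕ} (hn : 1 ≤ n) :
    (n + 1) * (2 * ν + n + 1) * coeff (n + 1) (expBesselSeries ν q) =
      q * (2 * ν + 2 * n + 1) * coeff n (expBesselSeries ν q) +
        (1 - q ^ 2) * coeff (n - 1) (expBesselSeries ν q) := by
  obtain ⟨m, rfl⟩ := Nat.exists_eq_add_of_le' hn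
  have h := congrArg (coeff (m + 1)) (expBesselSeries_ode ν q)
  simp only [LinearMap.map_add, LinearMap.map_sub, coeff_succ_X_mul, coeff_C_mul, ← map_pow,
    ← map_ofNat C 2, ← map_mul, coeff_derivative] at h
  rw [Nat.add_sub_cancel]
  push_cast at h ⊢
  linear_combination h

theorem coeff_expBesselSeries_succ_eq (ν q : ℂ) {n : ℕ} (hn : 1 ≤ n)
    (hν : 2 * ν + n + 1 ≠ 0) :
    coeff (n + 1) (expBesselSeries ν q) =
      q * (2 * ν + 2 * n + 1) / ((n + 1) * (2 * ν + n + 1)) * coeff n (expBesselSeries ν q) +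
        (1 - q ^ 2) / ((n + 1) * (2 * ν + n + 1)) * coeff (n - 1) (expBesselSeries ν q) := by
  have hD : ((n : ℂ) + 1) * (2 * ν + n + 1) ≠ 0 := mul_ne_zero (Nat.cast_add_one_ne_zero n) hν
  field_simp
  linear_combination coeff_expBesselSeries_succ ν q hn

theorem normCoeff_eq_of_hasSumEverywhere {ν : ℂ} {h : ℂ → ℂ} {a : ℂ⟦X⟧}
    (ha : HasSumEverywhere a (fun z => h z * modBesselSeries ν z)) (n : ℕ) :
    normCoeff ν h n = Gamma (ν + 1) * coeff n a := by
  rw [normCoeff, ha.iteratedDeriv_zero,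
    mul_div_cancel_left₀ _ (Nat.cast_ne_zero.2 n.factorial_ne_zero)]

theorem sinh_besselI_coeff_recurrence (ν p : ℂ) (hν : ∀ n : ℕ, 2 * ν + (n : ℂ) + 1 ≠ 0)
    (u : ℕ → ℂ) (hu : ∀ n, u n = normCoeff ν (fun z => Complex.exp (p * z)) n)
    (v : ℕ → ℂ) (hv : ∀ n, v n = normCoeff ν (fun z => Complex.exp (-p * z)) n)
    (w : ℕ → ℂ) (hw : ∀ n, w n = normCoeff ν (fun z => Complex.sinh (p * z)) n) :
    (∀ n : ℕ, w n = (u n - v n) / 2) ∧ u 0 = 1 ∧ u 1 = p ∧ v 0 = 1 ∧ v 1 = -p ∧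
    (∀ n : ℕ, 1 ≤ n →
      u (n + 1) = (p * (2 * ν + 2 * ((n : ℂ)) + 1) / ((((n : ℂ)) + 1) * (2 * ν + ((n : ℂ)) + 1))) * u n + ((1 - p ^ 2) / ((((n : ℂ)) + 1) * (2 * ν + ((n : ℂ)) + 1))) * u (n - 1) ∧
      v (n + 1) = (-(p * (2 * ν + 2 * ((n : ℂ)) + 1)) / ((((n : ℂ)) + 1) * (2 * ν + ((n : ℂ)) + 1))) * v n + ((1 - p ^ 2) / ((((n : ℂ)) + 1) * (2 * ν + ((n : ℂ)) + 1))) * v (n - 1)) := by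
  have hΓ : Gamma (ν + 1) ≠ 0 :=
    Gamma_ne_zero fun m hm => hν (2 * m + 1) (by push_cast; linear_combination 2 * hm)
  have hu' n : u n = Gamma (ν + 1) * coeff n (expBesselSeries ν p) := by
    rw [hu, normCoeff_eq_of_hasSumEverywhere (hasSumEverywhere_expBesselSeries ν p)]
  have hv' n : v n = Gamma (ν + 1) * coeff n (expBesselSeries ν (-p)) := by
    rw [hv, normCoeff_eq_of_hasSumEverywhere (hasSumEverywhere_expBesselSeries ν (-p))]
  have hsinh : (fun z => Complex.sinh (p * z) * modBesselSeries ν z) =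
      fun z => 2⁻¹ * (Complex.exp (p * z) * modBesselSeries ν z -
        Complex.exp (-p * z) * modBesselSeries ν z) := by
    ext z; rw [Complex.sinh, neg_mul]; ring
  have hw' n : w n = Gamma (ν + 1) *
      coeff n (C 2⁻¹ * (expBesselSeries ν p - expBesselSeries ν (-p))) := by
    rw [hw]
    refine normCoeff_eq_of_hasSumEverywhere ?_ n
    rw [hsinh]
    exact ((hasSumEverywhere_expBesselSeries ν p).sub
      (hasSumEverywhere_expBesselSeries ν (-p))).C_mul 2⁻¹
  refine ⟨fun n => ?_, ?_, ?_, ?_, ?_, fun n hn => ⟨?_, ?_⟩⟩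
  · rw [hw', hu', hv', coeff_C_mul, map_sub]; ring
  · rw [hu', coeff_zero_expBesselSeries, mul_inv_cancel₀ hΓ]
  · rw [hu', coeff_one_expBesselSeries, mul_left_comm, mul_inv_cancel₀ hΓ, mul_one]
  · rw [hv', coeff_zero_expBesselSeries, mul_inv_cancel₀ hΓ]
  · rw [hv', coeff_one_expBesselSeries, mul_left_comm, mul_inv_cancel₀ hΓ, mul_one]
  · rw [hu', hu', hu', coeff_expBesselSeries_succ_eq ν p hn (hν n)]; ring
  · rw [hv', hv', hv', coeff_expBesselSeries_succ_eq ν (-p) hn (hν n)]; ring
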